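/- (Vandermonde integral over the unit ball) For every positive integer n, ∫_{{y ∈ ℝ^n : ∑_j y_j^2 ≤ 1}} Δ(y)^2 dy_1⋯dy_n = [1/Γ(n²/2 + 1)] · (2π)^{n/2} · 2^{-n²/2} · ∏_{j=1}^n Γ(1+j). -/

import Mathlib

/-!
Write `Δ(x)` as the determinant of the monic probabilists' Hermite polynomials `He_j(x_i)`.
Expanding `Δ²` over pairs of permutations and integrating against `∏ e^{-x_i²/2}`, the
orthogonality `∫ He_a He_b e^{-t²/2} dt = δ_{ab} a! √(2π)` leaves only the diagonal and gives
Mehta's integral `∫ Δ² e^{-|x|²/2} = (2π)^{n/2} ∏_{j ≤ n} j!`.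

On the other hand `Δ²` is homogeneous of degree `n(n-1)`, so its integral over the ball of
radius `r` is `r^{n²}` times the one over the unit ball. Writing
`e^{-|x|²/2} = ∫_{t > |x|²/2} e^{-t} dt` and exchanging the integrals turns the Gaussian
integral into `∫₀^∞ e^{-t} (2t)^{n²/2} dt = 2^{n²/2} Γ(n²/2 + 1)` times the unit-ball integral.
-/

open MeasureTheory Real Finset

noncomputable def vandermonde {n : ℕ} (x : Fin n → ℝ) : ℝ :=
  ∏ i : Fin n, ∏ j ∈ Finset.Ioi i, (x i - x j)

open Polynomial
open Equiv (Perm)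
open scoped Nat ENNReal

section Vandermonde

variable {n : ℕ}

theorem vandermonde_sq_eq_det_sq (x : Fin n → ℝ) :
    vandermonde x ^ 2 = (Matrix.vandermonde x).det ^ 2 := by
  rw [Matrix.det_vandermonde, vandermonde, ← prod_pow, ← prod_pow]
  refine prod_congr rfl fun i _ => ?_
  rw [← prod_pow, ← prod_pow]
  exact prod_congr rfl fun j _ => by ring

theorem Fin.sum_card_Ioi : ∑ i : Fin n, #(Ioi i) = n.choose 2 := by
  simp_rw [Fin.card_Ioi]
  rw [Fin.sum_univ_eq_sum_range (fun i => n - 1 - i), sum_range_reflect (fun i => i),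
    sum_range_id, Nat.choose_two_right]

theorem vandermonde_smul (r : ℝ) (x : Fin n → ℝ) :
    vandermonde (r • x) = r ^ n.choose 2 * vandermonde x := by
  rw [vandermonde, vandermonde, ← Fin.sum_card_Ioi, ← prod_pow_eq_pow_sum, ← prod_mul_distrib]
  refine prod_congr rfl fun i _ => ?_
  rw [← prod_const, ← prod_mul_distrib]
  exact prod_congr rfl fun j _ => by simp only [Pi.smul_apply, smul_eq_mul]; ring

theorem continuous_vandermonde : Continuous (vandermonde (n := n)) := by
  unfold vandermonde
  fun_prop

/-- For monic `p j` of degree `j`, `det (p j (x i)) = det (x i ^ j)`; square the Leibniz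
expansion of the former. -/
theorem vandermonde_sq_eq_sum_perm {p : ℕ → ℝ[X]} (hmonic : ∀ j, (p j).Monic)
    (hdeg : ∀ j, (p j).natDegree = j) (x : Fin n → ℝ) :
    vandermonde x ^ 2 = ∑ σ : Perm (Fin n), ∑ τ : Perm (Fin n),
      ((Perm.sign σ : ℤ) : ℝ) * (Perm.sign τ : ℤ) *
        ∏ i, (p (σ i)).eval (x i) * (p (τ i)).eval (x i) := by
  have hdet : (Matrix.vandermonde x).det =
      ∑ σ : Perm (Fin n), ((Perm.sign σ : ℤ) : ℝ) * ∏ i, (p (σ i)).eval (x i) := by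
    rw [Matrix.det_eval_matrixOfPolynomials_eq_det_vandermonde x (fun j => p j)
      (fun j => hdeg j) (fun j => hmonic j), ← Matrix.det_transpose, Matrix.det_apply']
    rfl
  rw [vandermonde_sq_eq_det_sq, hdet, sq, sum_mul_sum]
  refine sum_congr rfl fun σ _ => sum_congr rfl fun τ _ => ?_
  rw [prod_mul_distrib]
  ring

end Vandermonde

section OrthogonalPolynomials

variable {n : ℕ} {w : ℝ → ℝ} {p : ℕ → ℝ[X]}

theorem integral_vandermonde_sq_mul_prod_eq_of_orthogonal (hmonic : ∀ j, (p j).Monic)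
    (hdeg : ∀ j, (p j).natDegree = j)
    (hint : ∀ a b, Integrable fun t => (p a).eval t * (p b).eval t * w t)
    (horth : ∀ a b, a ≠ b → ∫ t, (p a).eval t * (p b).eval t * w t = 0) :
    ∫ x : Fin n → ℝ, vandermonde x ^ 2 * ∏ i, w (x i) =
      n ! * ∏ j ∈ range n, ∫ t, (p j).eval t ^ 2 * w t := by
  set F : Perm (Fin n) → Perm (Fin n) → Fin n → ℝ → ℝ :=
    fun σ τ i t => (p (σ i)).eval t * (p (τ i)).eval t * w t
  have hexpand : ∀ x : Fin n → ℝ, vandermonde x ^ 2 * ∏ i, w (x i) = ∑ σ, ∑ τ,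
      ((Perm.sign σ : ℤ) : ℝ) * (Perm.sign τ : ℤ) * ∏ i, F σ τ i (x i) := by
    intro x
    simp only [vandermonde_sq_eq_sum_perm hmonic hdeg, sum_mul, F, prod_mul_distrib, mul_assoc]
  have hF : ∀ σ τ, Integrable fun x : Fin n → ℝ => ∏ i, F σ τ i (x i) :=
    fun σ τ => Integrable.fintype_prod fun i => hint _ _
  have hoff : ∀ σ τ : Perm (Fin n), σ ≠ τ → ∏ i, ∫ t, F σ τ i t = 0 := by
    intro σ τ hστ
    obtain ⟨i, hi⟩ : ∃ i, σ i ≠ τ i := by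
      by_contra! h
      exact hστ (Equiv.ext h)
    exact prod_eq_zero (mem_univ i) (horth _ _ (Fin.val_injective.ne hi))
  simp_rw [hexpand]
  rw [integral_finsetSum _ fun σ _ => integrable_finsetSum _ fun τ _ => (hF σ τ).const_mul _]
  simp_rw [integral_finsetSum _ fun τ _ => (hF _ τ).const_mul _, integral_const_mul,
    integral_fintype_prod_volume_eq_prod]
  have hdiag : ∀ σ : Perm (Fin n),
      ∑ τ, ((Perm.sign σ : ℤ) : ℝ) * (Perm.sign τ : ℤ) * ∏ i, ∫ t, F σ τ i t =
        ∏ j ∈ range n, ∫ t, (p j).eval t ^ 2 * w t := by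
    intro σ
    rw [sum_eq_single_of_mem σ (mem_univ σ) fun τ _ h => by rw [hoff σ τ h.symm, mul_zero],
      ← Int.cast_mul, ← Units.val_mul, Int.units_mul_self, Units.val_one, Int.cast_one, one_mul,
      ← Fin.prod_univ_eq_prod_range]
    simp only [F, sq]
    exact Equiv.prod_comp σ fun j : Fin n => ∫ t, (p j).eval t * (p j).eval t * w t
  simp only [hdiag, sum_const, Finset.card_univ, Fintype.card_perm, Fintype.card_fin, nsmul_eq_mul]

end OrthogonalPolynomials

section Hermite

theorem integral_gaussian_eq_sqrt_two_pi : ∫ x : ℝ, exp (-(x ^ 2 / 2)) = √(2 * π) := by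
  convert integral_gaussian (1 / 2) using 3 with x
  · ring_nf
  · ring

theorem integrable_eval_mul_gaussian (p : ℝ[X]) :
    Integrable fun x => p.eval x * exp (-(x ^ 2 / 2)) := by
  simp_rw [eval_eq_sum_range, sum_mul]
  refine integrable_finsetSum _ fun i _ => ?_
  have hmon := integrable_rpow_mul_exp_neg_mul_sq (b := 1 / 2) (by norm_num)
    (s := i) (by linarith [(Nat.cast_nonneg i : (0 : ℝ) ≤ i)])
  refine (hmon.const_mul (p.coeff i)).congr (ae_of_all _ fun x => ?_)
  simp only [rpow_natCast]
  ring_nf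

theorem integrable_eval_mul_hermite_mul_gaussian (p : ℝ[X]) (k : ℕ) :
    Integrable fun x => p.eval x * (aeval x (hermite k) * exp (-(x ^ 2 / 2))) := by
  simpa [← eval_map_algebraMap, mul_assoc] using
    integrable_eval_mul_gaussian (p * (hermite k).map (algebraMap ℤ ℝ))

/-- Derivative form of the recurrence `hermite_succ`. -/
theorem hasDerivAt_hermite_mul_gaussian (k : ℕ) (x : ℝ) :
    HasDerivAt (fun y => aeval y (hermite k) * exp (-(y ^ 2 / 2)))
      (-(aeval x (hermite (k + 1)) * exp (-(x ^ 2 / 2)))) x := by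
  have hgauss : HasDerivAt (fun y : ℝ => exp (-(y ^ 2 / 2))) (-x * exp (-(x ^ 2 / 2))) x := by
    simpa [mul_comm] using (((hasDerivAt_pow 2 x).div_const 2).neg).exp
  refine ((Polynomial.hasDerivAt_aeval (hermite k) x).mul hgauss).congr_deriv ?_
  rw [hermite_succ, map_sub, map_mul, aeval_X]
  ring

theorem integral_eval_mul_hermite_mul_gaussian (p : ℝ[X]) (k : ℕ) :
    ∫ x, p.eval x * (aeval x (hermite k) * exp (-(x ^ 2 / 2))) =
      ∫ x, (derivative^[k] p).eval x * exp (-(x ^ 2 / 2)) := by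
  induction k generalizing p with
  | zero => simp
  | succ k ih =>
    have hparts := integral_mul_deriv_eq_deriv_mul_of_integrable
      (fun x _ => p.hasDerivAt x) (fun x _ => hasDerivAt_hermite_mul_gaussian k x)
      ((integrable_eval_mul_hermite_mul_gaussian p (k + 1)).neg.congr
        (ae_of_all _ fun x => by simp))
      (integrable_eval_mul_hermite_mul_gaussian (derivative p) k)
      (integrable_eval_mul_hermite_mul_gaussian p k)
    simp only [mul_neg, integral_neg, neg_inj] at hparts
    rw [hparts, ih, Function.iterate_succ_apply]

theorem iterate_derivative_hermite_self (n : ℕ) : derivative^[n] (hermite n) = C (n ! : ℤ) := by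
  have hdeg : (derivative^[n] (hermite n)).natDegree = 0 :=
    Nat.eq_zero_of_le_zero <| (natDegree_iterate_derivative _ _).trans_eq <| by
      rw [natDegree_hermite, Nat.sub_self]
  rw [eq_C_of_natDegree_eq_zero hdeg, coeff_iterate_derivative, zero_add, coeff_hermite_self,
    Nat.descFactorial_self, nsmul_one]

theorem integral_hermite_mul_hermite_mul_gaussian_of_lt {a b : ℕ} (hab : a < b) :
    ∫ x, aeval x (hermite a) * aeval x (hermite b) * exp (-(x ^ 2 / 2)) = 0 := by
  have h := integral_eval_mul_hermite_mul_gaussian ((hermite a).map (algebraMap ℤ ℝ)) b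
  rw [iterate_derivative_map, iterate_derivative_eq_zero (natDegree_hermite.trans_lt hab)] at h
  simpa only [eval_map_algebraMap, ← mul_assoc, Polynomial.map_zero, eval_zero, zero_mul,
    integral_zero] using h

theorem integral_hermite_sq_mul_gaussian (a : ℕ) :
    ∫ x, aeval x (hermite a) ^ 2 * exp (-(x ^ 2 / 2)) = a ! * √(2 * π) := by
  have h := integral_eval_mul_hermite_mul_gaussian ((hermite a).map (algebraMap ℤ ℝ)) a
  rw [iterate_derivative_map, iterate_derivative_hermite_self] at h
  simp only [eval_map_algebraMap, ← mul_assoc, ← sq] at h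
  simp [h, integral_const_mul, integral_gaussian_eq_sqrt_two_pi]

end Hermite

theorem integral_vandermonde_sq_mul_gaussian (n : ℕ) :
    ∫ x : Fin n → ℝ, vandermonde x ^ 2 * exp (-(∑ i, x i ^ 2) / 2) =
      (n.superFactorial : ℝ) * √(2 * π) ^ n := by
  set He : ℕ → ℝ[X] := fun j => (hermite j).map (algebraMap ℤ ℝ)
  have horth : ∀ a b, a ≠ b →
      ∫ t, (He a).eval t * (He b).eval t * exp (-(t ^ 2 / 2)) = 0 := by
    intro a b hab
    simp only [He, eval_map_algebraMap]
    rcases hab.lt_or_gt with hab | hba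
    · exact integral_hermite_mul_hermite_mul_gaussian_of_lt hab
    · simpa only [mul_comm (aeval _ (hermite a))] using
        integral_hermite_mul_hermite_mul_gaussian_of_lt hba
  have hexp : ∀ x : Fin n → ℝ, exp (-(∑ i, x i ^ 2) / 2) = ∏ i, exp (-(x i ^ 2 / 2)) := by
    intro x
    rw [← exp_sum, neg_div, sum_div, sum_neg_distrib]
  simp_rw [hexp]
  rw [integral_vandermonde_sq_mul_prod_eq_of_orthogonal (fun j => (hermite_monic j).map _)
    (fun j => ((hermite_monic j).natDegree_map _).trans natDegree_hermite)
    (fun a b => by simpa only [eval_mul, mul_assoc] using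
      integrable_eval_mul_gaussian (He a * He b)) horth]
  simp only [eval_map_algebraMap, integral_hermite_sq_mul_gaussian, prod_mul_distrib,
    prod_const, card_range, ← mul_assoc]
  rw [← Nat.prod_range_succ_factorial, prod_range_succ]
  push_cast
  ring

theorem ofReal_exp_neg_eq_setLIntegral_indicator {a : ℝ} (ha : 0 ≤ a) :
    ENNReal.ofReal (exp (-a)) =
      ∫⁻ t in Set.Ioi 0, (Set.Ici a).indicator (fun t => ENNReal.ofReal (exp (-t))) t := by
  rw [lintegral_indicator measurableSet_Ici, restrict_Ioi_eq_restrict_Ici,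
    Measure.restrict_restrict measurableSet_Ici, Set.Ici_inter_Ici, max_eq_left ha,
    ← restrict_Ioi_eq_restrict_Ici, ← ofReal_integral_eq_lintegral_ofReal
      (integrableOn_exp_neg_Ioi a) (ae_of_all _ fun t => (exp_pos _).le), integral_exp_neg_Ioi]

/-- Tonelli applied to `exp (-a) = ∫_{t ≥ a} exp (-t) dt`. -/
theorem lintegral_mul_ofReal_exp_neg {α : Type*} [MeasurableSpace α] {μ : Measure α}
    [SFinite μ] {g : α → ℝ≥0∞} {a : α → ℝ} (hg : Measurable g) (ha : Measurable a)
    (ha0 : ∀ x, 0 ≤ a x) :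
    ∫⁻ x, g x * ENNReal.ofReal (exp (-a x)) ∂μ =
      ∫⁻ t in Set.Ioi 0, ENNReal.ofReal (exp (-t)) *
        ∫⁻ x in {x | a x ≤ t}, g x ∂μ := by
  have hsub : ∀ t, MeasurableSet {x | a x ≤ t} := fun t => measurableSet_le ha measurable_const
  have hswap : ∀ x t, g x * (Set.Ici (a x)).indicator (fun t => ENNReal.ofReal (exp (-t))) t =
      {x | a x ≤ t}.indicator g x * ENNReal.ofReal (exp (-t)) := by
    intro x t
    by_cases h : a x ≤ t <;> simp [h]
  calc ∫⁻ x, g x * ENNReal.ofReal (exp (-a x)) ∂μ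
      = ∫⁻ x, (∫⁻ t in Set.Ioi 0,
          g x * (Set.Ici (a x)).indicator (fun t => ENNReal.ofReal (exp (-t))) t) ∂μ := by
        refine lintegral_congr fun x => ?_
        rw [lintegral_const_mul _ ((measurable_neg.exp.ennreal_ofReal).indicator measurableSet_Ici),
          ← ofReal_exp_neg_eq_setLIntegral_indicator (ha0 x)]
    _ = ∫⁻ t in Set.Ioi 0,
          ∫⁻ x, {x | a x ≤ t}.indicator g x * ENNReal.ofReal (exp (-t)) ∂μ := by
        simp_rw [hswap]
        refine lintegral_lintegral_swap (Measurable.aemeasurable ?_)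
        exact ((hg.comp measurable_fst).indicator
            (measurableSet_le (ha.comp measurable_fst) measurable_snd)).mul
          (measurable_snd.neg.exp.ennreal_ofReal)
    _ = _ := by
        refine lintegral_congr fun t => ?_
        rw [lintegral_mul_const _ (hg.indicator (hsub t)), lintegral_indicator (hsub t), mul_comm]

section Homogeneous

variable {n k : ℕ} {f : (Fin n → ℝ) → ℝ}

open scoped Pointwise in
theorem smul_setOf_sum_sq_le {r : ℝ} (hr : r ≠ 0) (c : ℝ) :
    r • {x : Fin n → ℝ | ∑ i, x i ^ 2 ≤ c} = {x | ∑ i, x i ^ 2 ≤ r ^ 2 * c} := by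
  ext y
  rw [Set.mem_smul_set_iff_inv_smul_mem₀ hr]
  simp only [Set.mem_ofPred_eq, Pi.smul_apply, smul_eq_mul, mul_pow, ← mul_sum]
  rw [inv_pow, inv_mul_le_iff₀ (by positivity)]

theorem isCompact_setOf_sum_sq_le (c : ℝ) :
    IsCompact {x : Fin n → ℝ | ∑ i, x i ^ 2 ≤ c} := by
  refine Metric.isCompact_of_isClosed_isBounded (isClosed_le (by fun_prop) continuous_const) ?_
  refine isBounded_iff_forall_norm_le.mpr ⟨√c, fun x hx => ?_⟩
  refine (pi_norm_le_iff_of_nonneg (sqrt_nonneg c)).mpr fun i => ?_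
  rw [Real.norm_eq_abs]
  exact abs_le_sqrt <| (single_le_sum (fun j _ => sq_nonneg (x j)) (mem_univ i)).trans hx

theorem setIntegral_sum_sq_le_sq_of_homogeneous
    (hf : ∀ r, 0 < r → ∀ x, f (r • x) = r ^ k * f x) {r : ℝ} (hr : 0 < r) :
    ∫ x in {x : Fin n → ℝ | ∑ i, x i ^ 2 ≤ r ^ 2}, f x =
      r ^ (n + k) * ∫ x in {x : Fin n → ℝ | ∑ i, x i ^ 2 ≤ 1}, f x := by
  have h := Measure.setIntegral_comp_smul_of_pos volume f
    {x : Fin n → ℝ | ∑ i, x i ^ 2 ≤ 1} hr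
  rw [smul_setOf_sum_sq_le hr.ne', mul_one, Module.finrank_fin_fun, smul_eq_mul] at h
  simp_rw [hf r hr, integral_const_mul] at h
  rw [pow_add, mul_assoc, h]
  field_simp

theorem integral_mul_gaussian_of_homogeneous (hf : Continuous f) (hf0 : ∀ x, 0 ≤ f x)
    (hhom : ∀ r, 0 < r → ∀ x, f (r • x) = r ^ k * f x) :
    ∫ x, f x * exp (-(∑ i, x i ^ 2) / 2) =
      2 ^ (((n + k : ℕ) : ℝ) / 2) * Gamma (((n + k : ℕ) : ℝ) / 2 + 1) *
        ∫ x in {x : Fin n → ℝ | ∑ i, x i ^ 2 ≤ 1}, f x := by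
  set B := ∫ x in {x : Fin n → ℝ | ∑ i, x i ^ 2 ≤ 1}, f x
  set m : ℝ := ((n + k : ℕ) : ℝ) / 2
  have hB : 0 ≤ B := setIntegral_nonneg (measurableSet_le (by fun_prop) measurable_const)
    fun x _ => hf0 x
  have hset : ∀ t : ℝ,
      {x : Fin n → ℝ | (∑ i, x i ^ 2) / 2 ≤ t} = {x | ∑ i, x i ^ 2 ≤ 2 * t} := by
    intro t
    ext x
    rw [Set.mem_ofPred_eq, Set.mem_ofPred_eq, div_le_iff₀ two_pos, mul_comm]
  have hball : ∀ t : ℝ, 0 < t →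
      ∫ x in {x : Fin n → ℝ | ∑ i, x i ^ 2 ≤ 2 * t}, f x = (2 * t) ^ m * B := by
    intro t ht
    conv_lhs => rw [← sq_sqrt (by positivity : (0 : ℝ) ≤ 2 * t)]
    rw [setIntegral_sum_sq_le_sq_of_homogeneous hhom (sqrt_pos.mpr (by positivity)),
      sqrt_eq_rpow, ← rpow_natCast, ← rpow_mul (by positivity), one_div_mul_eq_div]
  have hradial : ∀ t ∈ Set.Ioi (0 : ℝ), exp (-t) * ((2 * t) ^ m * B) =
      2 ^ m * B * (exp (-t) * t ^ (m + 1 - 1)) := by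
    intro t ht
    rw [add_sub_cancel_right, mul_rpow two_pos.le (le_of_lt ht)]
    ring
  have hGamma : Gamma (m + 1) = ∫ t in Set.Ioi 0, exp (-t) * t ^ (m + 1 - 1) :=
    Gamma_eq_integral (by positivity)
  have hint : IntegrableOn (fun t => exp (-t) * ((2 * t) ^ m * B)) (Set.Ioi 0) :=
    IntegrableOn.congr_fun ((GammaIntegral_convergent (by positivity)).const_mul (2 ^ m * B))
      (fun t ht => (hradial t ht).symm) measurableSet_Ioi
  have hnonneg : ∀ t ∈ Set.Ioi (0 : ℝ), 0 ≤ exp (-t) * ((2 * t) ^ m * B) := fun t ht => by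
    rw [hradial t ht]
    exact mul_nonneg (by positivity) (mul_nonneg (exp_pos _).le (rpow_nonneg (le_of_lt ht) _))
  rw [integral_eq_lintegral_of_nonneg_ae (ae_of_all _ fun x => by positivity [hf0 x])
      (by fun_prop : Continuous _).aestronglyMeasurable]
  simp_rw [ENNReal.ofReal_mul (hf0 _), neg_div]
  rw [lintegral_mul_ofReal_exp_neg hf.measurable.ennreal_ofReal (by fun_prop)
      (fun x => by positivity),
    setLIntegral_congr_fun measurableSet_Ioi fun t ht => by
      rw [hset, ← ofReal_integral_eq_lintegral_ofReal
          (hf.continuousOn.integrableOn_compact (isCompact_setOf_sum_sq_le _))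
          (ae_of_all _ fun x => hf0 x), hball t ht,
        ← ENNReal.ofReal_mul (exp_pos _).le],
    ← ofReal_integral_eq_lintegral_ofReal hint
      (ae_restrict_of_forall_mem measurableSet_Ioi hnonneg),
    ENNReal.toReal_ofReal (setIntegral_nonneg measurableSet_Ioi hnonneg),
    setIntegral_congr_fun measurableSet_Ioi hradial, integral_const_mul, ← hGamma]
  ring

end Homogeneous

theorem vandermonde_integral_unit_ball_general (n : ℕ) :
    (∫ y in {y : Fin n → ℝ | ∑ j : Fin n, (y j) ^ 2 ≤ 1}, (vandermonde y) ^ 2) =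
      1 / Real.Gamma ((n : ℝ) ^ 2 / 2 + 1) * (2 * π) ^ ((n : ℝ) / 2) *
        2 ^ (-((n : ℝ) ^ 2) / 2) * ∏ j ∈ Finset.Icc 1 n, Real.Gamma (1 + j) := by
  have hgauss := integral_mul_gaussian_of_homogeneous (k := 2 * n.choose 2)
    (f := fun x : Fin n → ℝ => vandermonde x ^ 2) (continuous_vandermonde.pow 2)
    (fun x => sq_nonneg _) fun r _ x => by
      rw [vandermonde_smul, mul_pow, ← pow_mul, mul_comm 2]
  have hdim : ((n + 2 * n.choose 2 : ℕ) : ℝ) = n ^ 2 := by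
    push_cast [Nat.cast_choose_two]
    ring
  have hGamma : ∏ j ∈ Icc 1 n, Gamma (1 + j) = n.superFactorial := by
    rw [← Nat.prod_Icc_factorial, Nat.cast_prod]
    exact prod_congr rfl fun j _ => by rw [add_comm, Gamma_nat_eq_factorial]
  have hsqrt : √(2 * π) ^ n = (2 * π) ^ ((n : ℝ) / 2) := by
    rw [sqrt_eq_rpow, ← rpow_natCast, ← rpow_mul (by positivity), one_div_mul_eq_div]
  rw [integral_vandermonde_sq_mul_gaussian, hdim, hsqrt] at hgauss
  have hpos : 0 < 2 ^ ((n : ℝ) ^ 2 / 2) * Gamma ((n : ℝ) ^ 2 / 2 + 1) :=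
    mul_pos (by positivity) (Gamma_pos_of_pos (by positivity))
  rw [hGamma, neg_div, rpow_neg two_pos.le]
  refine mul_left_cancel₀ hpos.ne' ?_
  rw [← hgauss]
  field_simp

/-- **Vandermonde integral over the unit ball.** -/
theorem vandermonde_integral_unit_ball (n : ℕ) (hn : 0 < n) :
    (∫ y in {y : Fin n → ℝ | ∑ j : Fin n, (y j) ^ 2 ≤ 1}, (vandermonde y) ^ 2) =
      1 / Real.Gamma ((n : ℝ) ^ 2 / 2 + 1) * (2 * π) ^ ((n : ℝ) / 2) *
        2 ^ (-((n : ℝ) ^ 2) / 2) * ∏ j ∈ Finset.Icc 1 n, Real.Gamma (1 + j) :=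
  vandermonde_integral_unit_ball_general n
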